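/- arXiv:2101.11202 — 2 statements merged into one kernel-verified Lean document; each statement's English description precedes it below -/
import Mathlib

section
/- Suppose every region of the segmentation R° : P → Fin m° is nonempty. If μ°, μ* : Fin m° × Fin N_W → (0,∞) satisfy l((R°,μ°); x) = l((R°,μ*); x) for every count array x : P × Fin N_W → ℕ, then μ* = μ°. That is, the Poisson rates of the piecewise constant model are uniquely identified by the likelihood function given the segmentation. -/
/-- The reduced Poisson log-likelihood of a count array `x` under segmentation `R`
and rates `μ`: `l((R,μ); x) = Σ_w Σ_i (x(i,w)·log μ(R i, w) − μ(R i, w))`. -/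
noncomputable def loglik {NI NW m : ℕ} (R : Fin NI → Fin m)
    (μ : Fin m × Fin NW → ℝ) (x : Fin NI × Fin NW → ℕ) : ℝ :=
  ∑ w : Fin NW, ∑ i : Fin NI, ((x (i, w) : ℝ) * Real.log (μ (R i, w)) - μ (R i, w))

lemma loglik_indicator_sub {NI NW m : ℕ} (R : Fin NI → Fin m)
    (μ : Fin m × Fin NW → ℝ) (i0 : Fin NI) (w0 : Fin NW) :
    loglik R μ (fun p => if p = (i0, w0) then 1 else 0) - loglik R μ (fun _ => 0)
      = Real.log (μ (R i0, w0)) := by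
  unfold loglik
  rw [← Finset.sum_sub_distrib]
  beta_reduce
  push_cast
  have : ∀ w : Fin NW,
      (∑ i : Fin NI, ((if (i, w) = (i0, w0) then (1:ℝ) else 0) * Real.log (μ (R i, w)) - μ (R i, w)))
        - (∑ i : Fin NI, ((0:ℝ) * Real.log (μ (R i, w)) - μ (R i, w)))
      = if w = w0 then Real.log (μ (R i0, w0)) else 0 := by
    intro w
    rw [← Finset.sum_sub_distrib]
    have : ∀ i : Fin NI,
        ((if (i, w) = (i0, w0) then (1:ℝ) else 0) * Real.log (μ (R i, w)) - μ (R i, w))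
          - ((0:ℝ) * Real.log (μ (R i, w)) - μ (R i, w))
        = if i = i0 ∧ w = w0 then Real.log (μ (R i0, w0)) else 0 := by
      intro i
      by_cases h : i = i0 ∧ w = w0
      · obtain ⟨h1, h2⟩ := h
        subst h1; subst h2
        simp
      · have : (i, w) ≠ (i0, w0) := by
          intro hc
          exact h ⟨congrArg Prod.fst hc, congrArg Prod.snd hc⟩
        simp [this, h]
    rw [Finset.sum_congr rfl (fun i _ => this i)]
    by_cases hw : w = w0
    · subst hw
      simp [Finset.sum_ite_eq']
    · simp [hw]
  rw [Finset.sum_congr rfl (fun w _ => this w)]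
  simp [Finset.sum_ite_eq']

/-- Proposition 4 (identifiability of the rates): if every region of `R°` is
nonempty and two positive rate arrays `μ°`, `μ*` give the same log-likelihood for
every count array, then `μ* = μ°`. -/
theorem rates_identifiable_given_segmentation
    {NI NW m0 : ℕ} (R0 : Fin NI → Fin m0) (hR0surj : ∀ h, ∃ i, R0 i = h)
    (μ0 μstar : Fin m0 × Fin NW → ℝ)
    (hμ0 : ∀ p, 0 < μ0 p) (hμstar : ∀ p, 0 < μstar p)
    (heq : ∀ x : Fin NI × Fin NW → ℕ, loglik R0 μ0 x = loglik R0 μstar x) :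
    μstar = μ0 := by
  funext p
  obtain ⟨h, w0⟩ := p
  obtain ⟨i0, hi0⟩ := hR0surj h
  have key : Real.log (μ0 (R0 i0, w0)) = Real.log (μstar (R0 i0, w0)) := by
    have h1 := loglik_indicator_sub R0 μ0 i0 w0
    have h2 := loglik_indicator_sub R0 μstar i0 w0
    rw [← h1, ← h2, heq _, heq _]
  rw [hi0] at key
  exact (Real.log_injOn_pos (Set.mem_Ioi.mpr (hμ0 _)) (Set.mem_Ioi.mpr (hμstar _)) key).symm
end

section
/- (Proposition 2, uniform strong law.) For any fixed segmentation R : P → Fin m, almost surely sup_{μ ∈ Θ(R)} | (1/n)·Σ_{t=1}^n l((R,μ); X_t) − L(R,μ) | → 0 as n → ∞; and the same almost-sure uniform convergence holds with l and L replaced by their gradients in μ, and with l and L replaced by their Hessians in μ. -/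
/-!
For fixed `μ`, the log-likelihood, its gradient and its Hessian are affine functions of the
count array, and their expectations are the same affine functions evaluated at `λ°`. So the
deviation of the sample mean from the expectation is the linear part applied to `x̄ₙ - λ°`, where
`x̄ₙ` is the empirical mean of the first `n` arrays. Its coefficients (`log μ`, `1/μ`, `1/μ²`) are
bounded uniformly on `Θ` since `C_d > 0`, so the supremum over `Θ` is at most a constant times
`Σ |x̄ₙ - λ°|`. This tends to zero almost surely by the strong law applied to each of the
finitely many Poisson coordinates.
-/

open MeasureTheory ProbabilityTheory Filter Topology

/-- Gradient of `l((R,μ); x)` in `μ`: its `(h,w)` entry is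
`Σ_{i : R i = h} (x(i,w)/μ(h,w) − 1)`. -/
noncomputable def loglikGrad {NI NW m : ℕ} (R : Fin NI → Fin m)
    (μ : Fin m × Fin NW → ℝ) (x : Fin NI × Fin NW → ℕ) :
    Fin m × Fin NW → ℝ :=
  fun hw => ∑ i : Fin NI,
    if R i = hw.1 then ((x (i, hw.2) : ℝ) / μ hw - 1) else 0

/-- Diagonal of the Hessian of `l((R,μ); x)` in `μ`: its `(h,w)` entry is
`−Σ_{i : R i = h} x(i,w)/μ(h,w)²`. -/
noncomputable def loglikHess {NI NW m : ℕ} (R : Fin NI → Fin m)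
    (μ : Fin m × Fin NW → ℝ) (x : Fin NI × Fin NW → ℕ) :
    Fin m × Fin NW → ℝ :=
  fun hw => -∑ i : Fin NI,
    if R i = hw.1 then (x (i, hw.2) : ℝ) / (μ hw) ^ 2 else 0

/-- The expected log-likelihood `L(R,μ)` when the true per-pixel rates are
`λ°(i,w) = μ°(R° i, w)`. -/
noncomputable def expLoglik {NI NW m0 m : ℕ} (R0 : Fin NI → Fin m0)
    (μ0 : Fin m0 × Fin NW → ℝ) (R : Fin NI → Fin m) (μ : Fin m × Fin NW → ℝ) : ℝ :=
  ∑ w : Fin NW, ∑ i : Fin NI, (μ0 (R0 i, w) * Real.log (μ (R i, w)) - μ (R i, w))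

/-- Gradient of `L(R,μ)` in `μ`. -/
noncomputable def expLoglikGrad {NI NW m0 m : ℕ} (R0 : Fin NI → Fin m0)
    (μ0 : Fin m0 × Fin NW → ℝ) (R : Fin NI → Fin m) (μ : Fin m × Fin NW → ℝ) :
    Fin m × Fin NW → ℝ :=
  fun hw => ∑ i : Fin NI,
    if R i = hw.1 then (μ0 (R0 i, hw.2) / μ hw - 1) else 0

/-- Diagonal of the Hessian of `L(R,μ)` in `μ`. -/
noncomputable def expLoglikHess {NI NW m0 m : ℕ} (R0 : Fin NI → Fin m0)
    (μ0 : Fin m0 × Fin NW → ℝ) (R : Fin NI → Fin m) (μ : Fin m × Fin NW → ℝ) :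
    Fin m × Fin NW → ℝ :=
  fun hw => -∑ i : Fin NI,
    if R i = hw.1 then μ0 (R0 i, hw.2) / (μ hw) ^ 2 else 0

/-- The compact parameter box `Θ(R) = [C_d, C_u]^(Fin m × Fin N_W)`. -/
def Theta (Cd Cu : ℝ) (m NW : ℕ) : Set (Fin m × Fin NW → ℝ) :=
  {μ | ∀ p, μ p ∈ Set.Icc Cd Cu}

open Real Finset Function
open scoped NNReal Nat

theorem hasSum_mul_natCast_poissonMeasure (r : ℝ≥0) :
    HasSum (fun n : ℕ => exp (-r) * r ^ n / n ! * n) r := by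
  have hshift (n : ℕ) : exp (-r) * r ^ (n + 1) / (n + 1)! * ((n + 1 : ℕ) : ℝ)
      = r * (exp (-r) * r ^ n / n !) := by
    rw [Nat.factorial_succ]
    push_cast
    field_simp
    ring
  refine (hasSum_nat_add_iff' 1).mp ?_
  simpa only [hshift, range_one, sum_singleton, Nat.cast_zero, mul_zero, sub_zero, mul_one]
    using (hasSum_one_poissonMeasure r).mul_left (r : ℝ)

theorem integrable_natCast_poissonMeasure (r : ℝ≥0) :
    Integrable (fun n : ℕ => (n : ℝ)) (poissonMeasure r) :=
  integrable_poissonMeasure_iff.2 <| by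
    simpa using (hasSum_mul_natCast_poissonMeasure r).summable

theorem integral_natCast_poissonMeasure (r : ℝ≥0) :
    ∫ n : ℕ, (n : ℝ) ∂(poissonMeasure r) = r := by
  simpa [integral_poissonMeasure, mul_comm] using (hasSum_mul_natCast_poissonMeasure r).tsum_eq

theorem strong_law_ae_real_Icc {Ω : Type*} [MeasurableSpace Ω] {Pr : Measure Ω}
    (Y : ℕ → Ω → ℝ) (hint : Integrable (Y 1) Pr) (hindep : Pairwise ((IndepFun · · Pr) on Y))
    (hident : ∀ t, IdentDistrib (Y t) (Y 1) Pr Pr) :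
    ∀ᵐ ω ∂Pr, Tendsto (fun n : ℕ => (∑ t ∈ Icc 1 n, Y t ω) / n) atTop (𝓝 Pr[Y 1]) := by
  have hsucc := strong_law_ae_real (fun t => Y (t + 1)) hint
    (fun s t hst => hindep (by simpa using hst)) (fun t => hident (t + 1))
  filter_upwards [hsucc] with ω hω
  refine hω.congr fun n => ?_
  rw [range_eq_Ico, sum_Ico_add' (fun t => Y t ω), zero_add, Ico_add_one_right_eq_Icc]

theorem ae_tendsto_average_of_map_eq_poissonMeasure {Ω : Type*} [MeasurableSpace Ω]
    {Pr : Measure Ω} {Y : ℕ → Ω → ℕ} {r : ℝ≥0} (hmeas : ∀ t, Measurable (Y t))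
    (hindep : Pairwise ((IndepFun · · Pr) on Y)) (hlaw : ∀ t, Pr.map (Y t) = poissonMeasure r) :
    ∀ᵐ ω ∂Pr, Tendsto (fun n : ℕ => (∑ t ∈ Icc 1 n, (Y t ω : ℝ)) / n) atTop (𝓝 r) := by
  have hident (t : ℕ) : IdentDistrib (Y t) (Y 1) Pr Pr :=
    ⟨(hmeas t).aemeasurable, (hmeas 1).aemeasurable, by rw [hlaw, hlaw]⟩
  have hmean : ∫ ω, (Y 1 ω : ℝ) ∂Pr = r := by
    rw [← integral_map (hmeas 1).aemeasurable measurable_from_top.aestronglyMeasurable, hlaw,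
      integral_natCast_poissonMeasure]
  have hint : Integrable (fun ω => (Y 1 ω : ℝ)) Pr := by
    refine (integrable_map_measure measurable_from_top.aestronglyMeasurable
      (hmeas 1).aemeasurable).1 ?_
    rw [hlaw]
    exact integrable_natCast_poissonMeasure r
  simpa only [hmean] using strong_law_ae_real_Icc (fun t ω => (Y t ω : ℝ)) hint
    (fun s t hst => (hindep hst).comp measurable_from_top measurable_from_top)
    (fun t => (hident t).comp measurable_from_top)

section AverageOfAffine

variable {ι P E : Type*} [Fintype P] [NormedAddCommGroup E] [NormedSpace ℝ E]

theorem average_sum_smul_add_sub_eq (a : P → E) (b : E) (y : ℕ → P → ℝ) (ℓ : P → ℝ) {n : ℕ}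
    (hn : n ≠ 0) :
    (1 / (n : ℝ)) • ∑ t ∈ Icc 1 n, (∑ p, y t p • a p + b) - (∑ p, ℓ p • a p + b)
      = ∑ p, ((∑ t ∈ Icc 1 n, y t p) / n - ℓ p) • a p := by
  have hn' : (n : ℝ) ≠ 0 := Nat.cast_ne_zero.2 hn
  rw [sum_add_distrib, sum_comm, sum_const, Nat.card_Icc, Nat.add_sub_cancel, smul_add,
    smul_sum, ← Nat.cast_smul_eq_nsmul ℝ, smul_smul, one_div_mul_cancel hn', one_smul]
  simp only [← sum_smul, smul_smul, sub_smul, sum_sub_distrib, div_eq_inv_mul, mul_one]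
  abel

theorem norm_average_sum_smul_add_sub_le (a : P → E) (b : E) {K : ℝ} (ha : ∀ p, ‖a p‖ ≤ K)
    (y : ℕ → P → ℝ) (ℓ : P → ℝ) {n : ℕ} (hn : n ≠ 0) :
    ‖(1 / (n : ℝ)) • ∑ t ∈ Icc 1 n, (∑ p, y t p • a p + b) - (∑ p, ℓ p • a p + b)‖
      ≤ (∑ p, |(∑ t ∈ Icc 1 n, y t p) / n - ℓ p|) * K := by
  rw [average_sum_smul_add_sub_eq a b y ℓ hn, sum_mul]
  refine (norm_sum_le _ _).trans (sum_le_sum fun p _ => ?_)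
  rw [norm_smul, Real.norm_eq_abs]
  exact mul_le_mul_of_nonneg_left (ha p) (abs_nonneg _)

theorem tendsto_iSup_norm_average_sub_of_eq_sum_smul_add (f : ι → (P → ℝ) → E)
    (a : ι → P → E) (b : ι → E) (hf : ∀ i y, f i y = ∑ p, y p • a i p + b i) {K : ℝ}
    (ha : ∀ i p, ‖a i p‖ ≤ K) (y : ℕ → P → ℝ) (ℓ : P → ℝ)
    (hy : ∀ p, Tendsto (fun n : ℕ => (∑ t ∈ Icc 1 n, y t p) / n) atTop (𝓝 (ℓ p))) :
    Tendsto (fun n : ℕ => ⨆ i, ‖(1 / (n : ℝ)) • ∑ t ∈ Icc 1 n, f i (y t) - f i ℓ‖)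
      atTop (𝓝 0) := by
  set D : ℕ → ℝ := fun n => ∑ p, |(∑ t ∈ Icc 1 n, y t p) / n - ℓ p|
  have hD : Tendsto D atTop (𝓝 0) := by
    simpa using tendsto_finsetSum univ fun p _ => ((hy p).sub_const (ℓ p)).abs
  have ha' (i : ι) (p : P) : ‖a i p‖ ≤ max K 0 := (ha i p).trans (le_max_left _ _)
  refine squeeze_zero' (Eventually.of_forall fun n => Real.iSup_nonneg fun i => norm_nonneg _)
    ?_ (by simpa using hD.mul_const (max K 0))
  filter_upwards [eventually_ne_atTop 0] with n hn
  refine Real.iSup_le (fun i => ?_) (mul_nonneg (sum_nonneg fun p _ => abs_nonneg _)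
    (le_max_right _ _))
  simp only [hf]
  exact norm_average_sum_smul_add_sub_le (a i) (b i) (ha' i) y ℓ hn

end AverageOfAffine

theorem abs_log_le_max_of_mem_Icc {a b x : ℝ} (ha : 0 < a) (hx : x ∈ Set.Icc a b) :
    |log x| ≤ max |log a| |log b| := by
  have hlo : log a ≤ log x := log_le_log ha hx.1
  have hhi : log x ≤ log b := log_le_log (ha.trans_le hx.1) hx.2
  rw [abs_le]
  constructor
  · linarith [neg_abs_le (log a), le_max_left |log a| |log b|]
  · linarith [le_abs_self (log b), le_max_right |log a| |log b|]

theorem norm_inv_le_inv_of_le {a x : ℝ} (ha : 0 < a) (hx : a ≤ x) : ‖x⁻¹‖ ≤ a⁻¹ := by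
  rw [norm_inv, Real.norm_of_nonneg (ha.le.trans hx)]
  exact inv_anti₀ ha hx

theorem norm_neg_inv_sq_le_inv_sq_of_le {a x : ℝ} (ha : 0 < a) (hx : a ≤ x) :
    ‖-(x ^ 2)⁻¹‖ ≤ (a ^ 2)⁻¹ := by
  rw [norm_neg, ← inv_pow, norm_pow, ← inv_pow]
  exact pow_le_pow_left₀ (norm_nonneg _) (norm_inv_le_inv_of_le ha hx) 2

section RealCounts

variable {NI NW m : ℕ} (R : Fin NI → Fin m) (μ : Fin m × Fin NW → ℝ)

/- `loglik`, `loglikGrad`, `loglikHess` with real-valued counts `y`: evaluated at `X t` they give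
the sample quantities, at `λ°` the expected ones. -/
noncomputable def loglikReal (y : Fin NI × Fin NW → ℝ) : ℝ :=
  ∑ w : Fin NW, ∑ i : Fin NI, (y (i, w) * log (μ (R i, w)) - μ (R i, w))

noncomputable def loglikGradReal (y : Fin NI × Fin NW → ℝ) : Fin m × Fin NW → ℝ :=
  fun hw => ∑ i : Fin NI, if R i = hw.1 then (y (i, hw.2) / μ hw - 1) else 0

noncomputable def loglikHessReal (y : Fin NI × Fin NW → ℝ) : Fin m × Fin NW → ℝ :=
  fun hw => -∑ i : Fin NI, if R i = hw.1 then y (i, hw.2) / (μ hw) ^ 2 else 0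

theorem loglikReal_eq_sum_smul_add (y : Fin NI × Fin NW → ℝ) :
    loglikReal R μ y
      = ∑ p, y p • log (μ (R p.1, p.2)) + -∑ p : Fin NI × Fin NW, μ (R p.1, p.2) := by
  rw [loglikReal, sum_comm, ← Fintype.sum_prod_type', ← sub_eq_add_neg, ← sum_sub_distrib]
  rfl

theorem loglikGradReal_eq_sum_smul_add (y : Fin NI × Fin NW → ℝ) :
    loglikGradReal R μ y = ∑ p, y p • Pi.single (R p.1, p.2) (μ (R p.1, p.2))⁻¹
      + fun hw => ∑ i : Fin NI, if R i = hw.1 then -1 else 0 := by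
  ext ⟨h, w⟩
  simp only [loglikGradReal, Pi.add_apply, Finset.sum_apply, Pi.smul_apply, Pi.single_apply,
    Fintype.sum_prod_type, Prod.mk.injEq, smul_eq_mul, mul_ite, mul_zero, and_comm (a := h = _),
    ite_and, sum_ite_eq, mem_univ, if_true, ← sum_add_distrib]
  refine sum_congr rfl fun i _ => ?_
  by_cases hi : R i = h
  · subst hi
    simp only [if_true]
    ring
  · simp [hi, Ne.symm hi]

theorem loglikHessReal_eq_sum_smul (y : Fin NI × Fin NW → ℝ) :
    loglikHessReal R μ y = ∑ p, y p • Pi.single (R p.1, p.2) (-(μ (R p.1, p.2) ^ 2)⁻¹) := by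
  ext ⟨h, w⟩
  simp only [loglikHessReal, Finset.sum_apply, Pi.smul_apply, Pi.single_apply,
    Fintype.sum_prod_type, Prod.mk.injEq, smul_eq_mul, mul_ite, mul_zero, and_comm (a := h = _),
    ite_and, sum_ite_eq, mem_univ, if_true, ← sum_neg_distrib]
  refine sum_congr rfl fun i _ => ?_
  by_cases hi : R i = h
  · subst hi
    simp only [if_true]
    ring
  · simp [hi, Ne.symm hi]

end RealCounts

theorem prop2_uniform_slln_general
    {NI NW m0 m : ℕ} (Cd Cu : ℝ) (hCd : 0 < Cd)
    (R0 : Fin NI → Fin m0)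
    (μ0 : Fin m0 × Fin NW → ℝ) (hA1 : ∀ p, μ0 p ∈ Set.Icc Cd Cu)
    (R : Fin NI → Fin m)
    {Ω : Type*} [MeasurableSpace Ω] (Pr : Measure Ω)
    (X : ℕ → Ω → Fin NI × Fin NW → ℕ)
    (hmeas : ∀ t p, Measurable fun ω => X t ω p)
    (hindep : iIndepFun
      (fun (q : ℕ × (Fin NI × Fin NW)) ω => X q.1 ω q.2) Pr)
    (hlaw : ∀ t p, Measure.map (fun ω => X t ω p) Pr
      = poissonMeasure (μ0 (R0 p.1, p.2)).toNNReal) :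
    ∀ᵐ ω ∂Pr,
      (Tendsto (fun n : ℕ => ⨆ μ : Theta Cd Cu m NW,
          |(1 / (n : ℝ)) * ∑ t ∈ Finset.Icc 1 n, loglik R μ.1 (X t ω)
            - expLoglik R0 μ0 R μ.1|) atTop (𝓝 0)) ∧
      (Tendsto (fun n : ℕ => ⨆ μ : Theta Cd Cu m NW,
          ‖(1 / (n : ℝ)) • ∑ t ∈ Finset.Icc 1 n, loglikGrad R μ.1 (X t ω)
            - expLoglikGrad R0 μ0 R μ.1‖) atTop (𝓝 0)) ∧
      (Tendsto (fun n : ℕ => ⨆ μ : Theta Cd Cu m NW,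
          ‖(1 / (n : ℝ)) • ∑ t ∈ Finset.Icc 1 n, loglikHess R μ.1 (X t ω)
            - expLoglikHess R0 μ0 R μ.1‖) atTop (𝓝 0)) := by
  have hcounts : ∀ᵐ ω ∂Pr, ∀ p : Fin NI × Fin NW, Tendsto
      (fun n : ℕ => (∑ t ∈ Icc 1 n, (X t ω p : ℝ)) / n) atTop (𝓝 (μ0 (R0 p.1, p.2))) := by
    refine ae_all_iff.2 fun p => ?_
    rw [← Real.coe_toNNReal _ (hCd.le.trans (hA1 _).1)]
    exact ae_tendsto_average_of_map_eq_poissonMeasure (fun t => hmeas t p)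
      (fun s t hst => hindep.indepFun (i := (s, p)) (j := (t, p)) (by simpa using hst))
      (fun t => hlaw t p)
  filter_upwards [hcounts] with ω hω
  refine ⟨?_, ?_, ?_⟩
  · exact tendsto_iSup_norm_average_sub_of_eq_sum_smul_add
      (fun μ : Theta Cd Cu m NW => loglikReal R μ.1) _ _
      (fun μ => loglikReal_eq_sum_smul_add R μ.1)
      (fun μ p => abs_log_le_max_of_mem_Icc hCd (μ.2 _))
      (fun t p => (X t ω p : ℝ)) (fun p => μ0 (R0 p.1, p.2)) hω
  · exact tendsto_iSup_norm_average_sub_of_eq_sum_smul_add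
      (fun μ : Theta Cd Cu m NW => loglikGradReal R μ.1) _ _
      (fun μ => loglikGradReal_eq_sum_smul_add R μ.1)
      (fun μ p => (Pi.norm_single _).trans_le (norm_inv_le_inv_of_le hCd (μ.2 _).1))
      (fun t p => (X t ω p : ℝ)) (fun p => μ0 (R0 p.1, p.2)) hω
  · exact tendsto_iSup_norm_average_sub_of_eq_sum_smul_add
      (fun μ : Theta Cd Cu m NW => loglikHessReal R μ.1) _ 0
      (fun μ y => (loglikHessReal_eq_sum_smul R μ.1 y).trans (add_zero _).symm)
      (fun μ p => (Pi.norm_single _).trans_le (norm_neg_inv_sq_le_inv_sq_of_le hCd (μ.2 _).1))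
      (fun t p => (X t ω p : ℝ)) (fun p => μ0 (R0 p.1, p.2)) hω

/-- Proposition 2 (uniform strong law of large numbers): for i.i.d. count arrays
with independent Poisson entries, the normalized sample log-likelihood (and its
gradient and Hessian in `μ`) converge to the expected log-likelihood (gradient,
Hessian), almost surely uniformly over the compact box `Θ(R)`. -/
theorem prop2_uniform_slln
    {NI NW m0 m : ℕ} (Cd Cu : ℝ) (hCd : 0 < Cd) (hCdCu : Cd ≤ Cu)
    (R0 : Fin NI → Fin m0) (hR0surj : ∀ h, ∃ i, R0 i = h)
    (μ0 : Fin m0 × Fin NW → ℝ) (hA1 : ∀ p, μ0 p ∈ Set.Icc Cd Cu)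
    (R : Fin NI → Fin m)
    {Ω : Type*} [MeasurableSpace Ω] (Pr : Measure Ω) [IsProbabilityMeasure Pr]
    (X : ℕ → Ω → Fin NI × Fin NW → ℕ)
    (hmeas : ∀ t p, Measurable fun ω => X t ω p)
    (hindep : iIndepFun
      (fun (q : ℕ × (Fin NI × Fin NW)) ω => X q.1 ω q.2) Pr)
    (hlaw : ∀ t p, Measure.map (fun ω => X t ω p) Pr
      = poissonMeasure (μ0 (R0 p.1, p.2)).toNNReal) :
    ∀ᵐ ω ∂Pr,
      (Tendsto (fun n : ℕ => ⨆ μ : Theta Cd Cu m NW,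
          |(1 / (n : ℝ)) * ∑ t ∈ Finset.Icc 1 n, loglik R μ.1 (X t ω)
            - expLoglik R0 μ0 R μ.1|) atTop (𝓝 0)) ∧
      (Tendsto (fun n : ℕ => ⨆ μ : Theta Cd Cu m NW,
          ‖(1 / (n : ℝ)) • ∑ t ∈ Finset.Icc 1 n, loglikGrad R μ.1 (X t ω)
            - expLoglikGrad R0 μ0 R μ.1‖) atTop (𝓝 0)) ∧
      (Tendsto (fun n : ℕ => ⨆ μ : Theta Cd Cu m NW,
          ‖(1 / (n : ℝ)) • ∑ t ∈ Finset.Icc 1 n, loglikHess R μ.1 (X t ω)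
            - expLoglikHess R0 μ0 R μ.1‖) atTop (𝓝 0)) :=
  prop2_uniform_slln_general Cd Cu hCd R0 μ0 hA1 R Pr X hmeas hindep hlaw
end
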